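/- arXiv:2601.17337 — 7 statements merged into one kernel-verified Lean document; each statement's English description precedes it below -/
import Mathlib

section
/- The measure on ℝ² with density t ↦ |y₃|²/(π |t - y|⁴) with respect to the planar Lebesgue measure, where y = (y₁,y₂,y₃) ∈ ℝ³ with y₃ ≠ 0 and t ∈ ℝ² is identified with (t₁,t₂,0) ∈ ℝ³, is a probability measure: its total mass is 1. -/
open MeasureTheory Real Set Filter

/-! In polar coordinates around `(y₁, y₂)` the density depends only on the radius `r` and
integrates to `2π · y₃²/π · ∫₀^∞ r/(r² + y₃²)² dr`; the radial integrand has the primitive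
`-1/(2(r² + y₃²))`, so the radial integral is `1/(2y₃²)` and the total mass is `1`. -/

theorem integral_comp_sq_add_sq (g : ℝ → ℝ) :
    ∫ t : ℝ × ℝ, g (t.1 ^ 2 + t.2 ^ 2) = 2 * π * ∫ r in Ioi (0 : ℝ), r * g (r ^ 2) := by
  have h_polar : ∀ p : ℝ × ℝ, p.1 • g ((polarCoord.symm p).1 ^ 2 + (polarCoord.symm p).2 ^ 2)
      = p.1 * g (p.1 ^ 2) * 1 := by
    rintro ⟨r, θ⟩
    simp only [polarCoord_symm_apply, smul_eq_mul, mul_one, mul_pow, ← mul_add,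
      cos_sq_add_sin_sq]
  rw [← integral_comp_polarCoord_symm, integral_congr_ae (Eventually.of_forall h_polar),
    polarCoord_target, Measure.volume_eq_prod,
    setIntegral_prod_mul (fun r ↦ r * g (r ^ 2)) (fun _ ↦ (1 : ℝ))]
  simp only [setIntegral_const, smul_eq_mul, mul_one, Real.volume_real_Ioo_of_le
    (by linarith [pi_pos] : -π ≤ π)]
  ring

theorem integral_Ioi_div_sq_add_sq (c : ℝ) (hc : 0 < c) :
    ∫ r in Ioi (0 : ℝ), r / (r ^ 2 + c) ^ 2 = 1 / (2 * c) := by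
  have h_deriv : ∀ x : ℝ, HasDerivAt (fun r ↦ -(2 * (r ^ 2 + c))⁻¹) (x / (x ^ 2 + c) ^ 2) x := by
    intro x
    have h_inner : HasDerivAt (fun r : ℝ ↦ 2 * (r ^ 2 + c)) (2 * (2 * x)) x := by
      simpa using ((hasDerivAt_pow 2 x).add_const c).const_mul 2
    refine (h_inner.inv (by positivity)).neg.congr_deriv ?_
    field_simp
  have h_lim : Tendsto (fun r : ℝ ↦ -(2 * (r ^ 2 + c))⁻¹) atTop (nhds 0) := by
    have h_top : Tendsto (fun r : ℝ ↦ 2 * (r ^ 2 + c)) atTop atTop :=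
      (tendsto_atTop_add_const_right _ c (tendsto_pow_atTop two_ne_zero)).const_mul_atTop
        two_pos
    simpa using h_top.inv_tendsto_atTop.neg
  simpa using integral_Ioi_of_hasDerivAt_of_nonneg' (fun x _ ↦ h_deriv x)
    (fun x hx ↦ div_nonneg (le_of_lt hx) (by positivity)) h_lim

theorem integral_inv_sq_add_sq_add_sq (c : ℝ) (hc : 0 < c) :
    ∫ t : ℝ × ℝ, ((t.1 ^ 2 + t.2 ^ 2 + c) ^ 2)⁻¹ = π / c := by
  rw [integral_comp_sq_add_sq (fun s ↦ ((s + c) ^ 2)⁻¹)]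
  simp only [← div_eq_mul_inv, integral_Ioi_div_sq_add_sq c hc]
  field_simp

/-- The measure on `ℝ²` with density `t ↦ y₃²/(π |t - y|⁴)`, where
`y = (y₁,y₂,y₃) ∈ ℝ³` has `y₃ ≠ 0` and `t` is identified with `(t₁,t₂,0)`,
is a probability measure: its total mass is `1`. -/
theorem balayage_density_total_mass_one (y₁ y₂ y₃ : ℝ) (hy : y₃ ≠ 0) :
    (∫ t : ℝ × ℝ,
        y₃ ^ 2 / (Real.pi * ((t.1 - y₁) ^ 2 + (t.2 - y₂) ^ 2 + y₃ ^ 2) ^ 2))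
    = 1 := by
  have hc : 0 < y₃ ^ 2 := by positivity
  have h_density : ∀ t : ℝ × ℝ,
      y₃ ^ 2 / (π * ((t.1 - y₁) ^ 2 + (t.2 - y₂) ^ 2 + y₃ ^ 2) ^ 2)
        = y₃ ^ 2 / π * (((t - (y₁, y₂)).1 ^ 2 + (t - (y₁, y₂)).2 ^ 2 + y₃ ^ 2) ^ 2)⁻¹ := by
    intro t
    simp only [Prod.fst_sub, Prod.snd_sub, div_eq_mul_inv, mul_inv]
    ring
  simp only [h_density, integral_const_mul]
  rw [integral_sub_right_eq_self (fun t : ℝ × ℝ ↦ ((t.1 ^ 2 + t.2 ^ 2 + y₃ ^ 2) ^ 2)⁻¹),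
    integral_inv_sq_add_sq_add_sq _ hc]
  field_simp
end

section
/- Let γ₁, γ₂, h₁, h₂ > 0 with γ₂ − γ₁ > 1 and d ≥ 2. Then the function g_s(R) = 1 − γ₂R^d/(R²+h₂²)^{d/2} + γ₁R^d/(R²+h₁²)^{d/2} has exactly one zero R_s in (0,∞), i.e., there is a unique R_s > 0 with γ₂/(1+(h₂/R_s)²)^{d/2} − γ₁/(1+(h₁/R_s)²)^{d/2} = 1. -/
open Real Filter Set Topology

/-!
With `p = d / 2` put `f R = γ₂ (1 + (h₂/R)²)^(-p) - γ₁ (1 + (h₁/R)²)^(-p)`. It tends to `0` at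
`0⁺` and to `γ₂ - γ₁ > 1` at `∞`, so `f = 1` has a root. Its derivative is a positive multiple
of `κ - ((R² + h₂²)/(R² + h₁²))^(p+1)` with `κ` constant; the ratio is strictly monotone in `R`
(constant `1 < κ` when `h₁ = h₂`), so at a critical point `c` of `f` the function is strictly
decreasing on all of `(0, c)` or on all of `(c, ∞)`. Two roots would give, by Rolle, a critical
point between them, and then `f` would stay above `1` near `0` or below `1` near `∞`.
-/

def NegOnOneSideAtZeros (f' : ℝ → ℝ) : Prop :=
  ∀ c, 0 < c → f' c = 0 → (∀ x ∈ Ioo 0 c, f' x < 0) ∨ ∀ x ∈ Ioi c, f' x < 0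

section UniqueCrossing

variable {f f' : ℝ → ℝ} {L₀ L y : ℝ}

lemma strictAntiOn_of_hasDerivAt_neg {D : Set ℝ} (hD : Convex ℝ D)
    (hf : ∀ x ∈ D, HasDerivAt f (f' x) x) (hf' : ∀ x ∈ D, f' x < 0) : StrictAntiOn f D :=
  strictAntiOn_of_hasDerivWithinAt_neg hD (fun x hx ↦ (hf x hx).continuousAt.continuousWithinAt)
    (fun x hx ↦ (hf x (interior_subset hx)).hasDerivWithinAt)
    (fun x hx ↦ hf' x (interior_subset hx))

lemma exists_pos_eq_of_tendsto (hf : ContinuousOn f (Ioi 0))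
    (h₀ : Tendsto f (𝓝[>] 0) (𝓝 L₀)) (h : Tendsto f atTop (𝓝 L))
    (hL₀ : L₀ < y) (hL : y < L) : ∃ x, 0 < x ∧ f x = y := by
  obtain ⟨a, hfa, ha⟩ := ((h₀.eventually_lt_const hL₀).and self_mem_nhdsWithin).exists
  obtain ⟨b, hfb, hab⟩ := ((h.eventually_const_lt hL).and (eventually_gt_atTop a)).exists
  obtain ⟨x, hx, hfx⟩ := intermediate_value_Icc hab.le
    (hf.mono fun x hx ↦ lt_of_lt_of_le ha hx.1) ⟨hfa.le, hfb.le⟩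
  exact ⟨x, lt_of_lt_of_le ha hx.1, hfx⟩

theorem existsUnique_pos_eq_of_tendsto (hf : ∀ x, 0 < x → HasDerivAt f (f' x) x)
    (h₀ : Tendsto f (𝓝[>] 0) (𝓝 L₀)) (h : Tendsto f atTop (𝓝 L))
    (hL₀ : L₀ < y) (hL : y < L) (hcrit : NegOnOneSideAtZeros f') :
    ∃! x, 0 < x ∧ f x = y := by
  have hcont : ContinuousOn f (Ioi 0) := fun x hx ↦ (hf x hx).continuousAt.continuousWithinAt
  obtain ⟨x, hx, hfx⟩ := exists_pos_eq_of_tendsto hcont h₀ h hL₀ hL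
  suffices ∀ a b, 0 < a → a < b → f a = y → f b = y → False from
    ⟨x, ⟨hx, hfx⟩, fun z ⟨hz, hfz⟩ ↦ by
      rcases lt_trichotomy z x with hzx | rfl | hxz
      exacts [(this z x hz hzx hfz hfx).elim, rfl, (this x z hx hxz hfx hfz).elim]⟩
  intro a b ha hab hfa hfb
  obtain ⟨c, hc, hf'c⟩ := exists_hasDerivAt_eq_zero hab
    (hcont.mono fun x hx ↦ ha.trans_le hx.1) (hfa.trans hfb.symm) fun x hx ↦ hf x (ha.trans hx.1)
  rcases hcrit c (ha.trans hc.1) hf'c with hneg | hneg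
  · have hanti :=
      strictAntiOn_of_hasDerivAt_neg (convex_Ioo 0 c) (fun x hx ↦ hf x hx.1) hneg
    have : ∀ᶠ x in 𝓝[>] 0, y ≤ f x := by
      filter_upwards [Ioo_mem_nhdsGT ha] with x hx
      exact hfa ▸ (hanti ⟨hx.1, hx.2.trans hc.1⟩ ⟨ha, hc.1⟩ hx.2).le
    linarith [ge_of_tendsto h₀ this]
  · have hanti := strictAntiOn_of_hasDerivAt_neg (convex_Ioi c)
      (fun x hx ↦ hf x ((ha.trans hc.1).trans hx)) hneg
    have : ∀ᶠ x in atTop, f x ≤ y := by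
      filter_upwards [eventually_gt_atTop b] with x hx
      exact hfb ▸ (hanti hc.2 (hc.2.trans hx) hx).le
    linarith [le_of_tendsto h this]

lemma negOnOneSideAtZeros_of_eq_mul_sub {w ρ : ℝ → ℝ} {κ : ℝ} (hw : ∀ x, 0 < x → 0 < w x)
    (hf' : ∀ x, 0 < x → f' x = w x * (κ - ρ x))
    (hρ : StrictAntiOn ρ (Ioi 0) ∨ StrictMonoOn ρ (Ioi 0)) : NegOnOneSideAtZeros f' := by
  intro c hc hc₀
  have hρc : ρ c = κ := by
    rw [hf' c hc, mul_eq_zero, sub_eq_zero] at hc₀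
    exact (hc₀.resolve_left (hw c hc).ne').symm
  have hneg : ∀ x, 0 < x → ρ c < ρ x → f' x < 0 := fun x hx hcx ↦ by
    rw [hf' x hx]
    exact mul_neg_of_pos_of_neg (hw x hx) (sub_neg.2 (hρc ▸ hcx))
  rcases hρ with hρ | hρ
  · exact .inl fun x hx ↦ hneg x hx.1 (hρ hx.1 hc hx.2)
  · exact .inr fun x hx ↦ hneg x (hc.trans hx) (hρ hc (hc.trans hx) hx)

end UniqueCrossing

lemma mul_rpow_neg_sub_mul_rpow_neg {a b x y s : ℝ} (hb : b ≠ 0) (hx : 0 < x) (hy : 0 < y) :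
    a * x ^ (-s) - b * y ^ (-s) = b * x ^ (-s) * (a / b - (x / y) ^ s) := by
  rw [div_rpow hx.le hy.le, rpow_neg hx.le, rpow_neg hy.le]
  have := (rpow_pos_of_pos hx s).ne'
  have := (rpow_pos_of_pos hy s).ne'
  field_simp

lemma one_add_div_sq_div_sub {a b x y : ℝ} (hx : x ≠ 0) (hy : y ≠ 0) :
    (1 + (a / x) ^ 2) / (1 + (b / x) ^ 2) - (1 + (a / y) ^ 2) / (1 + (b / y) ^ 2)
      = (a ^ 2 - b ^ 2) * (y ^ 2 - x ^ 2) / ((x ^ 2 + b ^ 2) * (y ^ 2 + b ^ 2)) := by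
  have : x ^ 2 + b ^ 2 ≠ 0 := by positivity
  have : y ^ 2 + b ^ 2 ≠ 0 := by positivity
  field_simp
  ring

lemma strictAntiOn_one_add_div_sq_div {a b : ℝ} (hab : b ^ 2 < a ^ 2) :
    StrictAntiOn (fun x ↦ (1 + (a / x) ^ 2) / (1 + (b / x) ^ 2)) (Ioi 0) := by
  intro x (hx : 0 < x) y (hy : 0 < y) hxy
  rw [← sub_pos, one_add_div_sq_div_sub hx.ne' hy.ne']
  have : x ^ 2 < y ^ 2 := pow_lt_pow_left₀ hxy hx.le two_ne_zero
  exact div_pos (mul_pos (sub_pos.2 hab) (sub_pos.2 this)) (by positivity)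

lemma strictMonoOn_one_add_div_sq_div {a b : ℝ} (hab : a ^ 2 < b ^ 2) :
    StrictMonoOn (fun x ↦ (1 + (a / x) ^ 2) / (1 + (b / x) ^ 2)) (Ioi 0) := by
  intro x (hx : 0 < x) y (hy : 0 < y) hxy
  rw [← sub_neg, one_add_div_sq_div_sub hx.ne' hy.ne']
  have : x ^ 2 < y ^ 2 := pow_lt_pow_left₀ hxy hx.le two_ne_zero
  exact div_neg_of_neg_of_pos (mul_neg_of_neg_of_pos (sub_neg.2 hab) (sub_pos.2 this))
    (by positivity)

lemma tendsto_div_one_add_div_sq_rpow_atTop (γ h p : ℝ) :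
    Tendsto (fun r : ℝ ↦ γ / (1 + (h / r) ^ 2) ^ p) atTop (𝓝 γ) := by
  have hbase : Tendsto (fun r : ℝ ↦ 1 + (h / r) ^ 2) atTop (𝓝 1) := by
    simpa using ((tendsto_const_nhds.div_atTop tendsto_id).pow 2).const_add (1 : ℝ)
  simpa [Pi.div_def] using
    tendsto_const_nhds.div (hbase.rpow_const (.inl one_ne_zero)) (by simp)

lemma tendsto_div_one_add_div_sq_rpow_nhdsGT_zero (γ : ℝ) {h p : ℝ} (hh : 0 < h) (hp : 0 < p) :
    Tendsto (fun r : ℝ ↦ γ / (1 + (h / r) ^ 2) ^ p) (𝓝[>] 0) (𝓝 0) := by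
  have hdiv : Tendsto (fun r : ℝ ↦ h / r) (𝓝[>] 0) atTop := by
    simpa [div_eq_mul_inv] using tendsto_inv_nhdsGT_zero.const_mul_atTop hh
  exact tendsto_const_nhds.div_atTop <| (tendsto_rpow_atTop hp).comp <|
    tendsto_atTop_add_const_left _ 1 <| (tendsto_pow_atTop two_ne_zero).comp hdiv

lemma hasDerivAt_div_one_add_div_sq_rpow (γ h p : ℝ) {R : ℝ} (hR : R ≠ 0) :
    HasDerivAt (fun r : ℝ ↦ γ / (1 + (h / r) ^ 2) ^ p)
      (2 * p * γ * h ^ 2 / R ^ 3 * (1 + (h / R) ^ 2) ^ (-(p + 1))) R := by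
  have hbase : HasDerivAt (fun r : ℝ ↦ 1 + (h / r) ^ 2) (-(2 * h ^ 2 / R ^ 3)) R := by
    have hfun : (fun r : ℝ ↦ 1 + (h / r) ^ 2) = fun r ↦ 1 + h ^ 2 * (r ^ 2)⁻¹ := by
      ext r; rw [div_pow, div_eq_mul_inv]
    rw [hfun]
    refine ((((hasDerivAt_pow 2 R).inv (pow_ne_zero 2 hR)).const_mul (h ^ 2)).const_add 1
      ).congr_deriv ?_
    field_simp
    ring
  have hpow :
      (fun r : ℝ ↦ γ / (1 + (h / r) ^ 2) ^ p) = fun r ↦ γ * (1 + (h / r) ^ 2) ^ (-p) := by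
    ext r; rw [rpow_neg (by positivity), div_eq_mul_inv]
  rw [hpow]
  refine ((hbase.rpow_const (.inl (by positivity))).const_mul γ).congr_deriv ?_
  rw [show -p - 1 = -(p + 1) by ring]
  ring

lemma negOnOneSideAtZeros_deriv {p γ₁ γ₂ h₁ h₂ : ℝ} (hp : 0 < p) (hγ₁ : 0 < γ₁)
    (hh₁ : h₁ ≠ 0) (hγ : γ₁ < γ₂) :
    NegOnOneSideAtZeros fun x ↦ 2 * p * γ₂ * h₂ ^ 2 / x ^ 3 * (1 + (h₂ / x) ^ 2) ^ (-(p + 1))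
      - 2 * p * γ₁ * h₁ ^ 2 / x ^ 3 * (1 + (h₁ / x) ^ 2) ^ (-(p + 1)) := by
  rcases eq_or_ne (h₁ ^ 2) (h₂ ^ 2) with hh | hh
  · intro c hc hc₀
    simp only [div_pow, hh] at hc₀
    have : 0 < 2 * p * h₂ ^ 2 * (γ₂ - γ₁) / c ^ 3 * (1 + h₂ ^ 2 / c ^ 2) ^ (-(p + 1)) := by
      have := sub_pos.2 hγ
      have : h₂ ^ 2 ≠ 0 := hh ▸ pow_ne_zero 2 hh₁
      positivity
    exact (this.ne' (by linear_combination hc₀)).elim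
  have hb : γ₁ * h₁ ^ 2 ≠ 0 := by positivity
  refine negOnOneSideAtZeros_of_eq_mul_sub
    (w := fun x ↦ 2 * p / x ^ 3 * (γ₁ * h₁ ^ 2) * (1 + (h₂ / x) ^ 2) ^ (-(p + 1)))
    (κ := γ₂ * h₂ ^ 2 / (γ₁ * h₁ ^ 2))
    (ρ := fun x ↦ ((1 + (h₂ / x) ^ 2) / (1 + (h₁ / x) ^ 2)) ^ (p + 1))
    (fun x hx ↦ by positivity) (fun x hx ↦ ?_) ?_
  · have hA₂ : 0 < 1 + (h₂ / x) ^ 2 := by positivity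
    have hA₁ : 0 < 1 + (h₁ / x) ^ 2 := by positivity
    linear_combination (2 * p / x ^ 3) *
      mul_rpow_neg_sub_mul_rpow_neg (a := γ₂ * h₂ ^ 2) (s := p + 1) hb hA₂ hA₁
  · have hpow : StrictMonoOn (fun t : ℝ ↦ t ^ (p + 1)) (Ioi 0) :=
      fun s hs t _ hst ↦ rpow_lt_rpow (le_of_lt hs) hst (by linarith)
    have hq : ∀ x, 0 < (1 + (h₂ / x) ^ 2) / (1 + (h₁ / x) ^ 2) := fun x ↦ by positivity
    rcases hh.lt_or_gt with hh | hh
    · exact .inl (hpow.comp_strictAntiOn (strictAntiOn_one_add_div_sq_div hh) fun x _ ↦ hq x)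
    · exact .inr (hpow.comp (strictMonoOn_one_add_div_sq_div hh) fun x _ ↦ hq x)

theorem gs_unique_zero_general (d γ₁ γ₂ h₁ h₂ : ℝ) (hd : 2 ≤ d)
    (hγ₁ : 0 < γ₁) (hh₁ : 0 < h₁) (hh₂ : 0 < h₂)
    (hγ : 1 < γ₂ - γ₁) :
    ∃! R : ℝ, 0 < R ∧
      γ₂ / (1 + (h₂ / R) ^ 2) ^ (d / 2)
        - γ₁ / (1 + (h₁ / R) ^ 2) ^ (d / 2) = 1 := by
  have hp : 0 < d / 2 := by linarith
  refine existsUnique_pos_eq_of_tendsto (L₀ := 0)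
    (fun R hR ↦ (hasDerivAt_div_one_add_div_sq_rpow γ₂ h₂ _ hR.ne').sub
      (hasDerivAt_div_one_add_div_sq_rpow γ₁ h₁ _ hR.ne'))
    (by simpa using (tendsto_div_one_add_div_sq_rpow_nhdsGT_zero γ₂ hh₂ hp).sub
          (tendsto_div_one_add_div_sq_rpow_nhdsGT_zero γ₁ hh₁ hp))
    ((tendsto_div_one_add_div_sq_rpow_atTop γ₂ h₂ _).sub
      (tendsto_div_one_add_div_sq_rpow_atTop γ₁ h₁ _))
    zero_lt_one hγ ?_
  exact negOnOneSideAtZeros_deriv hp hγ₁ hh₁.ne' (by linarith)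

/-- When `γ₂ − γ₁ > 1`, `g_s` has exactly one zero in `(0,∞)`. -/
theorem gs_unique_zero (d γ₁ γ₂ h₁ h₂ : ℝ) (hd : 2 ≤ d)
    (hγ₁ : 0 < γ₁) (hγ₂ : 0 < γ₂) (hh₁ : 0 < h₁) (hh₂ : 0 < h₂)
    (hγ : 1 < γ₂ - γ₁) :
    ∃! R : ℝ, 0 < R ∧
      γ₂ / (1 + (h₂ / R) ^ 2) ^ (d / 2)
        - γ₁ / (1 + (h₁ / R) ^ 2) ^ (d / 2) = 1 :=
  gs_unique_zero_general d γ₁ γ₂ h₁ h₂ hd hγ₁ hh₁ hh₂ hγ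
end

section
/- Let γ₁, γ₂, h₁, h₂ > 0, d ≥ 2, with γ₂ − γ₁ = 1 and γ₂/γ₁ ≥ (h₁/h₂)². Then the function g_s(R) = 1 − γ₂R^d/(R²+h₂²)^{d/2} + γ₁R^d/(R²+h₁²)^{d/2} is strictly positive on (0,∞) and tends to 0 as R → ∞. -/
/-!
With `p = d/2` and `tᵢ = 1 + hᵢ²/R²`, each fraction `R^d/(R²+hᵢ²)^{d/2}` equals `tᵢ^{-p}`, so
`g_s(R) = γ₂ (1 - t₂^{-p}) - γ₁ (1 - t₁^{-p})` because `γ₂ - γ₁ = 1`, and the ratio hypothesis says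
`γ₁ (t₁ - 1) ≤ γ₂ (t₂ - 1)`. If `t₁ ≤ t₂`, positivity follows from monotonicity of `t ↦ 1 - t^{-p}`
and `γ₁ < γ₂`. If `t₂ < t₁`, strict convexity of `t ↦ t^{-p}` makes the secant slope
`(1 - t^{-p})/(t - 1)` strictly decreasing, which turns the ratio hypothesis into the claim.
The limit holds because each `tᵢ → 1`.
-/

open Real Filter Set

lemma strictConvexOn_rpow_neg {p : ℝ} (hp : 0 < p) :
    StrictConvexOn ℝ (Ioi 0) fun t : ℝ ↦ t ^ (-p) := by
  refine StrictMonoOn.strictConvexOn_of_deriv (convex_Ioi 0)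
    (fun t ht ↦ (continuousAt_id.rpow_const (Or.inl (ne_of_gt ht))).continuousWithinAt) ?_
  rw [interior_Ioi]
  intro s hs t _ hst
  simp only [Real.deriv_rpow_const]
  have : t ^ (-p - 1) < s ^ (-p - 1) := rpow_lt_rpow_of_neg hs hst (by linarith)
  exact mul_lt_mul_of_neg_left this (neg_neg_of_pos hp)

lemma mul_one_sub_rpow_neg_lt_mul_one_sub_rpow_neg {p γ₁ γ₂ t₁ t₂ : ℝ} (hp : 0 < p)
    (hγ₁ : 0 ≤ γ₁) (hγ : γ₁ < γ₂) (ht₁ : 1 ≤ t₁) (ht₂ : 1 < t₂)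
    (h : γ₁ * (t₁ - 1) ≤ γ₂ * (t₂ - 1)) :
    γ₁ * (1 - t₁ ^ (-p)) < γ₂ * (1 - t₂ ^ (-p)) := by
  have ht₂p : t₂ ^ (-p) < 1 := rpow_lt_one_of_one_lt_of_neg ht₂ (neg_neg_of_pos hp)
  rcases le_or_gt t₁ t₂ with h₁₂ | h₂₁
  · have : t₂ ^ (-p) ≤ t₁ ^ (-p) := rpow_le_rpow_of_nonpos (by linarith) h₁₂ (by linarith)
    calc γ₁ * (1 - t₁ ^ (-p)) ≤ γ₁ * (1 - t₂ ^ (-p)) := by gcongr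
      _ < γ₂ * (1 - t₂ ^ (-p)) := by gcongr
  · have ht₁' : 1 < t₁ := ht₂.trans h₂₁
    have hslope : (1 - t₁ ^ (-p)) / (t₁ - 1) < (1 - t₂ ^ (-p)) / (t₂ - 1) := by
      have := (strictConvexOn_rpow_neg hp).secant_strict_mono (a := 1) (x := t₂) (y := t₁)
        (mem_Ioi.2 one_pos) (zero_lt_one.trans ht₂) (zero_lt_one.trans ht₁') ht₂.ne' ht₁'.ne' h₂₁
      simp only [one_rpow] at this
      have hneg (t : ℝ) : (1 - t ^ (-p)) / (t - 1) = -((t ^ (-p) - 1) / (t - 1)) := by ring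
      rw [hneg, hneg]
      exact neg_lt_neg this
    have hslope₁ : 0 < (1 - t₁ ^ (-p)) / (t₁ - 1) := by
      have : t₁ ^ (-p) < 1 := rpow_lt_one_of_one_lt_of_neg ht₁' (neg_neg_of_pos hp)
      apply div_pos <;> linarith
    calc γ₁ * (1 - t₁ ^ (-p)) = γ₁ * (t₁ - 1) * ((1 - t₁ ^ (-p)) / (t₁ - 1)) := by
          field_simp [(sub_pos.2 ht₁').ne']
      _ ≤ γ₂ * (t₂ - 1) * ((1 - t₁ ^ (-p)) / (t₁ - 1)) := by gcongr
      _ < γ₂ * (t₂ - 1) * ((1 - t₂ ^ (-p)) / (t₂ - 1)) := by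
          gcongr; exact mul_pos (hγ₁.trans_lt hγ) (by linarith)
      _ = γ₂ * (1 - t₂ ^ (-p)) := by field_simp [(sub_pos.2 ht₂).ne']

lemma rpow_div_sq_add_sq_rpow {R : ℝ} (hR : 0 < R) (h d : ℝ) :
    R ^ d / (R ^ 2 + h ^ 2) ^ (d / 2) = (1 + h ^ 2 / R ^ 2) ^ (-(d / 2)) := by
  have hR2 : 0 < R ^ 2 := by positivity
  have hRd : R ^ d = (R ^ 2) ^ (d / 2) := by
    rw [← rpow_natCast, ← rpow_mul hR.le]; norm_num; ring_nf
  have hsplit : R ^ 2 + h ^ 2 = R ^ 2 * (1 + h ^ 2 / R ^ 2) := by field_simp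
  rw [hRd, hsplit, mul_rpow hR2.le (by positivity), rpow_neg (by positivity),
    div_mul_eq_div_div, div_self (rpow_pos_of_pos hR2 _).ne', one_div]

lemma tendsto_rpow_div_sq_add_sq_rpow (h d : ℝ) :
    Tendsto (fun R : ℝ ↦ R ^ d / (R ^ 2 + h ^ 2) ^ (d / 2)) atTop (nhds 1) := by
  have hinner : Tendsto (fun R : ℝ ↦ 1 + h ^ 2 / R ^ 2) atTop (nhds 1) := by
    simpa using tendsto_const_nhds.add
      (tendsto_const_nhds.div_atTop (tendsto_pow_atTop two_ne_zero) : Tendsto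
        (fun R : ℝ ↦ h ^ 2 / R ^ 2) atTop (nhds 0))
  have := hinner.rpow_const (p := -(d / 2)) (Or.inl one_ne_zero)
  rw [one_rpow] at this
  refine this.congr' ?_
  filter_upwards [eventually_gt_atTop 0] with R hR
  exact (rpow_div_sq_add_sq_rpow hR h d).symm

theorem gs_pos_weakly_admissible_general (d γ₁ γ₂ h₁ h₂ : ℝ) (hd : 2 ≤ d)
    (hγ₁ : 0 < γ₁) (hh₂ : 0 < h₂)
    (hγ : γ₂ - γ₁ = 1) (hratio : (h₁ / h₂) ^ (2 : ℝ) ≤ γ₂ / γ₁) :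
    (∀ R : ℝ, 0 < R →
      0 < 1 - γ₂ * R ^ d / (R ^ 2 + h₂ ^ 2) ^ (d / 2)
        + γ₁ * R ^ d / (R ^ 2 + h₁ ^ 2) ^ (d / 2)) ∧
    Tendsto (fun R : ℝ => 1 - γ₂ * R ^ d / (R ^ 2 + h₂ ^ 2) ^ (d / 2)
        + γ₁ * R ^ d / (R ^ 2 + h₁ ^ 2) ^ (d / 2)) atTop (nhds 0) := by
  have hγs : γ₁ * h₁ ^ 2 ≤ γ₂ * h₂ ^ 2 := by
    rw [rpow_two, div_pow, div_le_div_iff₀ (by positivity) hγ₁] at hratio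
    linarith
  refine ⟨fun R hR ↦ ?_, ?_⟩
  · have hR2 : 0 < R ^ 2 := by positivity
    have ht₁ : 1 ≤ 1 + h₁ ^ 2 / R ^ 2 := le_add_of_nonneg_right (by positivity)
    have ht₂ : 1 < 1 + h₂ ^ 2 / R ^ 2 := lt_add_of_pos_right 1 (by positivity)
    have hγt : γ₁ * (1 + h₁ ^ 2 / R ^ 2 - 1) ≤ γ₂ * (1 + h₂ ^ 2 / R ^ 2 - 1) := by
      simp only [add_sub_cancel_left, ← mul_div_assoc]
      exact div_le_div_of_nonneg_right hγs hR2.le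
    have key := mul_one_sub_rpow_neg_lt_mul_one_sub_rpow_neg (p := d / 2) (by linarith)
      hγ₁.le (by linarith) ht₁ ht₂ hγt
    rw [mul_div_assoc, mul_div_assoc, rpow_div_sq_add_sq_rpow hR, rpow_div_sq_add_sq_rpow hR]
    linarith
  · have := (tendsto_const_nhds (x := (1 : ℝ))).sub
      ((tendsto_rpow_div_sq_add_sq_rpow h₂ d).const_mul γ₂) |>.add
      ((tendsto_rpow_div_sq_add_sq_rpow h₁ d).const_mul γ₁)
    rw [show (1 : ℝ) - γ₂ * 1 + γ₁ * 1 = 0 by linarith] at this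
    simpa only [mul_div_assoc] using this

/-- In the weakly admissible case `γ₂ − γ₁ = 1` with `γ₂/γ₁ ≥ (h₁/h₂)²`,
`g_s` is strictly positive on `(0,∞)` and tends to `0` at infinity. -/
theorem gs_pos_weakly_admissible (d γ₁ γ₂ h₁ h₂ : ℝ) (hd : 2 ≤ d)
    (hγ₁ : 0 < γ₁) (hγ₂ : 0 < γ₂) (hh₁ : 0 < h₁) (hh₂ : 0 < h₂)
    (hγ : γ₂ - γ₁ = 1) (hratio : (h₁ / h₂) ^ (2 : ℝ) ≤ γ₂ / γ₁) :
    (∀ R : ℝ, 0 < R →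
      0 < 1 - γ₂ * R ^ d / (R ^ 2 + h₂ ^ 2) ^ (d / 2)
        + γ₁ * R ^ d / (R ^ 2 + h₁ ^ 2) ^ (d / 2)) ∧
    Tendsto (fun R : ℝ => 1 - γ₂ * R ^ d / (R ^ 2 + h₂ ^ 2) ^ (d / 2)
        + γ₁ * R ^ d / (R ^ 2 + h₁ ^ 2) ^ (d / 2)) atTop (nhds 0) :=
  gs_pos_weakly_admissible_general d γ₁ γ₂ h₁ h₂ hd hγ₁ hh₂ hγ hratio
end

section
/- Let γ₁, γ₂, h₁, h₂ > 0 with h₂ < h₁ and 1 < γ₂/γ₁ < (h₁/h₂)² (Case A₁), γ₂ − γ₁ > 1, d ≥ 2. Let r_c be the unique positive zero of g_c and R_s the unique positive zero of g_s (as in the paper). Then R_s < r_c. -/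
open Real

/-!
In the variable `y = R⁻²`, `g_s(R)` becomes `G(y) = 1 + γ₁ (1 + h₁² y)^(-d/2) - γ₂ (1 + h₂² y)^(-d/2)`,
and `G'(r⁻²)` is a positive multiple of `g_c(r)`. Comparing with `g_c(r_c) = 0` and using `h₂ < h₁`,
`G' < 0` on `(0, r_c⁻²)`. So if `R_s ≥ r_c`, then `0 = G(R_s⁻²) < G(0) = 1 + γ₁ - γ₂ < 0`.
-/

/-- `g_s(R)` in the variable `y = R⁻²`, with `s = d / 2`. -/
noncomputable def gsInvSq (s γ₁ γ₂ h₁ h₂ y : ℝ) : ℝ :=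
  1 + γ₁ * (1 + h₁ ^ 2 * y) ^ (-s) - γ₂ * (1 + h₂ ^ 2 * y) ^ (-s)

lemma gsInvSq_zero (s γ₁ γ₂ h₁ h₂ : ℝ) : gsInvSq s γ₁ γ₂ h₁ h₂ 0 = 1 + γ₁ - γ₂ := by
  simp [gsInvSq]

lemma one_add_mul_inv_sq_rpow_neg {R : ℝ} (hR : 0 < R) (c d : ℝ) (hc : 0 ≤ c) :
    (1 + c * (R ^ 2)⁻¹) ^ (-(d / 2)) = R ^ d / (R ^ 2 + c) ^ (d / 2) := by
  have hR2 : 0 < R ^ 2 := by positivity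
  rw [show 1 + c * (R ^ 2)⁻¹ = (R ^ 2 + c) / R ^ 2 by field_simp, rpow_neg (by positivity),
    div_rpow (by positivity) hR2.le, inv_div, ← rpow_natCast R 2, ← rpow_mul hR.le]
  norm_num [mul_div_cancel₀]

lemma gsInvSq_inv_sq {R : ℝ} (hR : 0 < R) (d γ₁ γ₂ h₁ h₂ : ℝ) :
    gsInvSq (d / 2) γ₁ γ₂ h₁ h₂ (R ^ 2)⁻¹
      = 1 - γ₂ * R ^ d / (R ^ 2 + h₂ ^ 2) ^ (d / 2) + γ₁ * R ^ d / (R ^ 2 + h₁ ^ 2) ^ (d / 2) := by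
  rw [gsInvSq, one_add_mul_inv_sq_rpow_neg hR _ _ (sq_nonneg h₁),
    one_add_mul_inv_sq_rpow_neg hR _ _ (sq_nonneg h₂)]
  ring

lemma hasDerivAt_one_add_mul_rpow_neg {c y : ℝ} (hy : 0 < 1 + c * y) (s : ℝ) :
    HasDerivAt (fun y ↦ (1 + c * y) ^ (-s)) (-(s * c / (1 + c * y) ^ (s + 1))) y := by
  have hlin : HasDerivAt (fun y ↦ 1 + c * y) c y := by
    simpa using ((hasDerivAt_id y).const_mul c).const_add 1
  convert hlin.rpow_const (p := -s) (Or.inl hy.ne') using 1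
  rw [show -s - 1 = -(s + 1) by ring, rpow_neg hy.le]
  ring

lemma hasDerivAt_gsInvSq {h₁ h₂ y : ℝ} (hy : 0 ≤ y) (s γ₁ γ₂ : ℝ) :
    HasDerivAt (gsInvSq s γ₁ γ₂ h₁ h₂)
      (s * (γ₂ * h₂ ^ 2 / (1 + h₂ ^ 2 * y) ^ (s + 1)
        - γ₁ * h₁ ^ 2 / (1 + h₁ ^ 2 * y) ^ (s + 1))) y := by
  have h₁y : 0 < 1 + h₁ ^ 2 * y := by positivity
  have h₂y : 0 < 1 + h₂ ^ 2 * y := by positivity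
  exact ((((hasDerivAt_one_add_mul_rpow_neg h₁y s).const_mul γ₁).const_add 1).sub
    ((hasDerivAt_one_add_mul_rpow_neg h₂y s).const_mul γ₂)).congr_deriv (by ring)

lemma div_rpow_lt_div_rpow_of_mul_lt_one {p γ₁ γ₂ h₁ h₂ r y : ℝ} (hp : 0 < p) (hγ₁ : 0 < γ₁)
    (hh : h₂ ^ 2 < h₁ ^ 2) (hy : 0 ≤ y) (hry : r ^ 2 * y < 1)
    (hr : γ₂ * h₂ ^ 2 * (r ^ 2 + h₁ ^ 2) ^ p = γ₁ * h₁ ^ 2 * (r ^ 2 + h₂ ^ 2) ^ p) :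
    γ₂ * h₂ ^ 2 / (1 + h₂ ^ 2 * y) ^ p < γ₁ * h₁ ^ 2 / (1 + h₁ ^ 2 * y) ^ p := by
  have hh₁ : 0 < h₁ ^ 2 := (sq_nonneg h₂).trans_lt hh
  have hrh₁ : 0 < (r ^ 2 + h₁ ^ 2) ^ p := rpow_pos_of_pos (by positivity) p
  have hbase : (r ^ 2 + h₂ ^ 2) * (1 + h₁ ^ 2 * y) < (r ^ 2 + h₁ ^ 2) * (1 + h₂ ^ 2 * y) := by
    nlinarith [mul_pos (sub_pos.2 hh) (sub_pos.2 hry)]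
  have hpow := rpow_lt_rpow (by positivity) hbase hp
  rw [mul_rpow (by positivity) (by positivity), mul_rpow (by positivity) (by positivity)] at hpow
  rw [div_lt_div_iff₀ (by positivity) (by positivity)]
  refine lt_of_mul_lt_mul_right (a := (r ^ 2 + h₁ ^ 2) ^ p) ?_ hrh₁.le
  calc γ₂ * h₂ ^ 2 * (1 + h₁ ^ 2 * y) ^ p * (r ^ 2 + h₁ ^ 2) ^ p
      = γ₁ * h₁ ^ 2 * ((r ^ 2 + h₂ ^ 2) ^ p * (1 + h₁ ^ 2 * y) ^ p) := by
        linear_combination (1 + h₁ ^ 2 * y) ^ p * hr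
    _ < γ₁ * h₁ ^ 2 * ((r ^ 2 + h₁ ^ 2) ^ p * (1 + h₂ ^ 2 * y) ^ p) := by gcongr
    _ = γ₁ * h₁ ^ 2 * (1 + h₂ ^ 2 * y) ^ p * (r ^ 2 + h₁ ^ 2) ^ p := by ring

lemma strictAntiOn_gsInvSq {s γ₁ γ₂ h₁ h₂ r : ℝ} (hs : 0 < s) (hγ₁ : 0 < γ₁)
    (hh : h₂ ^ 2 < h₁ ^ 2)
    (hr : γ₂ * h₂ ^ 2 * (r ^ 2 + h₁ ^ 2) ^ (s + 1) = γ₁ * h₁ ^ 2 * (r ^ 2 + h₂ ^ 2) ^ (s + 1)) :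
    StrictAntiOn (gsInvSq s γ₁ γ₂ h₁ h₂) (Set.Icc 0 (r ^ 2)⁻¹) := by
  refine strictAntiOn_of_deriv_neg (convex_Icc _ _)
    (fun y hy ↦ (hasDerivAt_gsInvSq hy.1 s γ₁ γ₂).continuousAt.continuousWithinAt) ?_
  rw [interior_Icc]
  rintro y ⟨hy, hyr⟩
  have hry : r ^ 2 * y < 1 := by
    rcases (sq_nonneg r).eq_or_lt with hr0 | hr0
    · simp [← hr0]
    · exact (lt_inv_mul_iff₀ hr0).1 (by rwa [mul_one])
  rw [(hasDerivAt_gsInvSq hy.le s γ₁ γ₂).deriv]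
  exact mul_neg_of_pos_of_neg hs
    (sub_neg.2 (div_rpow_lt_div_rpow_of_mul_lt_one (by linarith) hγ₁ hh hy.le hry hr))

theorem Rs_lt_rc_caseA1_general (d γ₁ γ₂ h₁ h₂ : ℝ) (hd : 2 ≤ d)
    (hγ₁ : 0 < γ₁) (hh₂ : 0 < h₂)
    (hh : h₂ < h₁)
    (hγ : 1 < γ₂ - γ₁)
    (rc Rs : ℝ) (hrc : 0 < rc) (hRs : 0 < Rs)
    (hgc : γ₂ * h₂ ^ 2 / (rc ^ 2 + h₂ ^ 2) ^ (d / 2 + 1)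
      - γ₁ * h₁ ^ 2 / (rc ^ 2 + h₁ ^ 2) ^ (d / 2 + 1) = 0)
    (hgs : 1 - γ₂ * Rs ^ d / (Rs ^ 2 + h₂ ^ 2) ^ (d / 2)
      + γ₁ * Rs ^ d / (Rs ^ 2 + h₁ ^ 2) ^ (d / 2) = 0) :
    Rs < rc := by
  by_contra! hle
  have hcross : γ₂ * h₂ ^ 2 * (rc ^ 2 + h₁ ^ 2) ^ (d / 2 + 1)
      = γ₁ * h₁ ^ 2 * (rc ^ 2 + h₂ ^ 2) ^ (d / 2 + 1) := by
    rwa [sub_eq_zero, div_eq_div_iff (by positivity) (by positivity)] at hgc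
  have hanti := strictAntiOn_gsInvSq (by linarith) hγ₁
    (pow_lt_pow_left₀ hh hh₂.le two_ne_zero) hcross
  have hRs_mem : (Rs ^ 2)⁻¹ ∈ Set.Icc 0 (rc ^ 2)⁻¹ := ⟨by positivity, by gcongr⟩
  have hlt := hanti ⟨le_rfl, by positivity⟩ hRs_mem (by positivity)
  rw [gsInvSq_inv_sq hRs, hgs, gsInvSq_zero] at hlt
  linarith

/-- Case A₁: `h₂ < h₁` and `1 < γ₂/γ₁ < (h₁/h₂)²`, `γ₂ − γ₁ > 1`.
If `r_c` is a positive zero of `g_c` and `R_s` a positive zero of `g_s`,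
then `R_s < r_c`. -/
theorem Rs_lt_rc_caseA1 (d γ₁ γ₂ h₁ h₂ : ℝ) (hd : 2 ≤ d)
    (hγ₁ : 0 < γ₁) (hγ₂ : 0 < γ₂) (hh₁ : 0 < h₁) (hh₂ : 0 < h₂)
    (hh : h₂ < h₁) (hlow : 1 < γ₂ / γ₁) (hhigh : γ₂ / γ₁ < (h₁ / h₂) ^ (2 : ℝ))
    (hγ : 1 < γ₂ - γ₁)
    (rc Rs : ℝ) (hrc : 0 < rc) (hRs : 0 < Rs)
    (hgc : γ₂ * h₂ ^ 2 / (rc ^ 2 + h₂ ^ 2) ^ (d / 2 + 1)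
      - γ₁ * h₁ ^ 2 / (rc ^ 2 + h₁ ^ 2) ^ (d / 2 + 1) = 0)
    (hgs : 1 - γ₂ * Rs ^ d / (Rs ^ 2 + h₂ ^ 2) ^ (d / 2)
      + γ₁ * Rs ^ d / (Rs ^ 2 + h₁ ^ 2) ^ (d / 2) = 0) :
    Rs < rc :=
  Rs_lt_rc_caseA1_general d γ₁ γ₂ h₁ h₂ hd hγ₁ hh₂ hh hγ rc Rs hrc hRs hgc hgs
end

section
/- Let γ₁, γ₂, h₁, h₂ > 0 with h₁ < h₂ and 1 < γ₂/γ₁ < (h₂/h₁)^d (Case B), γ₂ − γ₁ > 1, d ≥ 2. Let r_c be the unique positive zero of g_c and R_s the unique positive zero of g_s. Then r_c < R_s. -/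
open Real

set_option maxHeartbeats 1000000 in
/-- Case B: `h₁ < h₂` and `1 < γ₂/γ₁ < (h₂/h₁)^d`, `γ₂ − γ₁ > 1`.
If `r_c` is a positive zero of `g_c` and `R_s` a positive zero of `g_s`,
then `r_c < R_s`. -/
theorem rc_lt_Rs_caseB (d γ₁ γ₂ h₁ h₂ : ℝ) (hd : 2 ≤ d)
    (hγ₁ : 0 < γ₁) (hγ₂ : 0 < γ₂) (hh₁ : 0 < h₁) (hh₂ : 0 < h₂)
    (hh : h₁ < h₂) (hlow : 1 < γ₂ / γ₁) (hhigh : γ₂ / γ₁ < (h₂ / h₁) ^ d)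
    (hγ : 1 < γ₂ - γ₁)
    (rc Rs : ℝ) (hrc : 0 < rc) (hRs : 0 < Rs)
    (hgc : γ₂ * h₂ ^ 2 / (rc ^ 2 + h₂ ^ 2) ^ (d / 2 + 1)
      - γ₁ * h₁ ^ 2 / (rc ^ 2 + h₁ ^ 2) ^ (d / 2 + 1) = 0)
    (hgs : 1 - γ₂ * Rs ^ d / (Rs ^ 2 + h₂ ^ 2) ^ (d / 2)
      + γ₁ * Rs ^ d / (Rs ^ 2 + h₁ ^ 2) ^ (d / 2) = 0) :
    rc < Rs := by
  set A₁ : ℝ := Rs ^ 2 + h₁ ^ 2 with hA₁def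
  set A₂ : ℝ := Rs ^ 2 + h₂ ^ 2 with hA₂def
  set B₁ : ℝ := rc ^ 2 + h₁ ^ 2 with hB₁def
  set B₂ : ℝ := rc ^ 2 + h₂ ^ 2 with hB₂def
  have hA₁ : 0 < A₁ := by positivity
  have hA₂ : 0 < A₂ := by positivity
  have hB₁ : 0 < B₁ := by positivity
  have hB₂ : 0 < B₂ := by positivity
  have hA₁p : 0 < A₁ ^ (d / 2) := rpow_pos_of_pos hA₁ _
  have hA₂p : 0 < A₂ ^ (d / 2) := rpow_pos_of_pos hA₂ _
  have hA₁q : 0 < A₁ ^ (d / 2 + 1) := rpow_pos_of_pos hA₁ _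
  have hA₂q : 0 < A₂ ^ (d / 2 + 1) := rpow_pos_of_pos hA₂ _
  have hB₁q : 0 < B₁ ^ (d / 2 + 1) := rpow_pos_of_pos hB₁ _
  have hB₂q : 0 < B₂ ^ (d / 2 + 1) := rpow_pos_of_pos hB₂ _
  have hRd : 0 < Rs ^ d := rpow_pos_of_pos hRs _
  -- Step 1: from g_s(Rs) = 0, get γ₂ * A₁^{d/2} > γ₁ * A₂^{d/2}
  have hstep1 : γ₁ * A₂ ^ (d / 2) < γ₂ * A₁ ^ (d / 2) := by
    have h1 : γ₁ * Rs ^ d / A₁ ^ (d / 2) < γ₂ * Rs ^ d / A₂ ^ (d / 2) := by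
      linarith
    rw [div_lt_div_iff₀ hA₁p hA₂p] at h1
    have h2 : Rs ^ d * (γ₁ * A₂ ^ (d / 2)) < Rs ^ d * (γ₂ * A₁ ^ (d / 2)) := by
      ring_nf at h1 ⊢
      linarith
    exact lt_of_mul_lt_mul_left h2 hRd.le
  -- Step 2: h₂^2 * A₁ > h₁^2 * A₂
  have hstep2 : h₁ ^ 2 * A₂ < h₂ ^ 2 * A₁ := by
    have key : 0 < Rs ^ 2 * (h₂ ^ 2 - h₁ ^ 2) := by
      have : h₁ ^ 2 < h₂ ^ 2 := by nlinarith
      have := mul_pos (pow_pos hRs 2) (sub_pos.mpr this)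
      linarith
    simp only [hA₁def, hA₂def]
    nlinarith [key]
  -- Step 3: multiply, getting g_c(Rs) > 0 in cleared form
  have hstep3 : γ₁ * h₁ ^ 2 * A₂ ^ (d / 2 + 1) < γ₂ * h₂ ^ 2 * A₁ ^ (d / 2 + 1) := by
    have e1 : A₁ ^ (d / 2 + 1) = A₁ ^ (d / 2) * A₁ := rpow_add_one (ne_of_gt hA₁) _
    have e2 : A₂ ^ (d / 2 + 1) = A₂ ^ (d / 2) * A₂ := rpow_add_one (ne_of_gt hA₂) _
    rw [e1, e2]
    have key := mul_lt_mul'' hstep1 hstep2 (by positivity) (by positivity)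
    calc γ₁ * h₁ ^ 2 * (A₂ ^ (d / 2) * A₂)
        = γ₁ * A₂ ^ (d / 2) * (h₁ ^ 2 * A₂) := by ring
      _ < γ₂ * A₁ ^ (d / 2) * (h₂ ^ 2 * A₁) := key
      _ = γ₂ * h₂ ^ 2 * (A₁ ^ (d / 2) * A₁) := by ring
  -- Step 4: from g_c(rc) = 0
  have hstep4 : γ₂ * h₂ ^ 2 * B₁ ^ (d / 2 + 1) = γ₁ * h₁ ^ 2 * B₂ ^ (d / 2 + 1) := by
    have h1 : γ₂ * h₂ ^ 2 / B₂ ^ (d / 2 + 1) = γ₁ * h₁ ^ 2 / B₁ ^ (d / 2 + 1) := by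
      linarith
    rw [div_eq_div_iff hB₂q.ne' hB₁q.ne'] at h1
    linarith
  -- Step 5: A₂^q * B₁^q < A₁^q * B₂^q
  have hstep5 : A₂ ^ (d / 2 + 1) * B₁ ^ (d / 2 + 1) < A₁ ^ (d / 2 + 1) * B₂ ^ (d / 2 + 1) := by
    have h1 := mul_lt_mul_of_pos_right hstep3 hB₂q
    have h2 : γ₂ * h₂ ^ 2 * (A₂ ^ (d / 2 + 1) * B₁ ^ (d / 2 + 1))
        < γ₂ * h₂ ^ 2 * (A₁ ^ (d / 2 + 1) * B₂ ^ (d / 2 + 1)) := by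
      calc γ₂ * h₂ ^ 2 * (A₂ ^ (d / 2 + 1) * B₁ ^ (d / 2 + 1))
          = (γ₂ * h₂ ^ 2 * B₁ ^ (d / 2 + 1)) * A₂ ^ (d / 2 + 1) := by ring
        _ = (γ₁ * h₁ ^ 2 * B₂ ^ (d / 2 + 1)) * A₂ ^ (d / 2 + 1) := by rw [hstep4]
        _ = γ₁ * h₁ ^ 2 * A₂ ^ (d / 2 + 1) * B₂ ^ (d / 2 + 1) := by ring
        _ < γ₂ * h₂ ^ 2 * A₁ ^ (d / 2 + 1) * B₂ ^ (d / 2 + 1) := h1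
        _ = γ₂ * h₂ ^ 2 * (A₁ ^ (d / 2 + 1) * B₂ ^ (d / 2 + 1)) := by ring
    exact lt_of_mul_lt_mul_left h2 (by positivity)
  -- Step 6: conclude A₂ * B₁ < A₁ * B₂
  have hstep6 : A₂ * B₁ < A₁ * B₂ := by
    by_contra hcon
    push_neg at hcon
    have hq : (0:ℝ) ≤ d / 2 + 1 := by linarith
    have h3 := rpow_le_rpow (by positivity : (0:ℝ) ≤ A₁ * B₂) hcon hq
    rw [mul_rpow (le_of_lt hA₁) (le_of_lt hB₂), mul_rpow (le_of_lt hA₂) (le_of_lt hB₁)] at h3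
    linarith
  -- Step 7: expand and conclude rc < Rs
  have hexp : 0 < (Rs ^ 2 - rc ^ 2) * (h₂ ^ 2 - h₁ ^ 2) := by
    simp only [hA₁def, hA₂def, hB₁def, hB₂def] at hstep6
    nlinarith [hstep6]
  by_contra hcon
  push_neg at hcon
  have h4 : Rs ^ 2 ≤ rc ^ 2 := by nlinarith
  have h5 : h₁ ^ 2 < h₂ ^ 2 := by nlinarith
  nlinarith [hexp]
end

section
/- Let γ₁, γ₂, h₁, h₂ > 0, d ≥ 2, with (γ₁/γ₂)^{1/d} ≤ h₁/h₂ ≤ (γ₂/γ₁)^{1/2}. Then for all r > 0, (r² + h₁²)/(r² + h₂²) ≥ (γ₁h₁²/(γ₂h₂²))^{2/(d+2)}, and consequently r ↦ r^{d-1} Q'(r) is nondecreasing on (0,∞), where Q'(r) = max(1,d−2) · r · (γ₂(r²+h₂²)^{-d/2} − γ₁(r²+h₁²)^{-d/2}). -/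
/-!
Put `t = h₁/h₂` and `B = γ₁h₁²/(γ₂h₂²) = (γ₁/γ₂) t²`. The lower bound on `t` gives `B ≤ t^{d+2}` and
the upper one gives `B ≤ 1`, so `B ≤ min(t², 1)^{d/2+1}`; as `F(r) = (r²+h₁²)/(r²+h₂²)` lies between
`t²` and `1`, this is `B ≤ F(r)^{d/2+1}`, i.e. the first claim. Cross-multiplied, the same inequality
reads `γ₁h₁²(r²+h₁²)^{-d/2-1} ≤ γ₂h₂²(r²+h₂²)^{-d/2-1}`, which is the sign of the derivative of
`r^{d-1}Q'(r) = max(1,d-2) (γ₂ψ_{h₂}(r) - γ₁ψ_{h₁}(r))`, where `ψ_h(r) = r^d (r²+h²)^{-d/2}` has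
`ψ_h'(r) = d r^{d-1} h² (r²+h²)^{-d/2-1}`.
-/

open Real Set

lemma min_div_one_le_add_div_add {a b x : ℝ} (hb : 0 < b) (hx : 0 ≤ x) :
    min (a / b) 1 ≤ (x + a) / (x + b) := by
  have hxb : 0 < x + b := by positivity
  rcases le_total a b with hab | hab
  · refine (min_le_left _ _).trans ?_
    rw [div_le_div_iff₀ hb hxb]
    nlinarith
  · refine (min_le_right _ _).trans ?_
    rw [one_le_div hxb]
    linarith

lemma hasDerivAt_rpow_mul_sq_add_sq_rpow (d h : ℝ) {r : ℝ} (hr : 0 < r) :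
    HasDerivAt (fun x : ℝ => x ^ d * (x ^ 2 + h ^ 2) ^ (-d / 2))
      (d * r ^ (d - 1) * (h ^ 2 * (r ^ 2 + h ^ 2) ^ (-(d / 2 + 1)))) r := by
  have hs : 0 < r ^ 2 + h ^ 2 := by positivity
  have hpow : HasDerivAt (fun x : ℝ => x ^ d) (d * r ^ (d - 1)) r :=
    hasDerivAt_rpow_const (Or.inl hr.ne')
  have hsum : HasDerivAt (fun x : ℝ => (x ^ 2 + h ^ 2) ^ (-d / 2))
      (2 * r * (-d / 2) * (r ^ 2 + h ^ 2) ^ (-d / 2 - 1)) r := by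
    refine HasDerivAt.rpow_const ?_ (Or.inl hs.ne')
    simpa using (hasDerivAt_pow 2 r).add_const (h ^ 2)
  have hr_rpow : r ^ d = r ^ (d - 1) * r := by
    rw [← rpow_add_one hr.ne']
    ring_nf
  have hs_rpow :
      (r ^ 2 + h ^ 2) ^ (-d / 2) = (r ^ 2 + h ^ 2) ^ (-(d / 2 + 1)) * (r ^ 2 + h ^ 2) := by
    rw [← rpow_add_one hs.ne']
    ring_nf
  refine (hpow.mul hsum).congr_deriv ?_
  rw [hr_rpow, hs_rpow, show -d / 2 - 1 = -(d / 2 + 1) by ring]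
  ring

section Coefficients

variable {d γ₁ γ₂ h₁ h₂ : ℝ} (hγ₁ : 0 < γ₁) (hγ₂ : 0 < γ₂) (hh₁ : 0 < h₁) (hh₂ : 0 < h₂)
include hγ₁ hγ₂ hh₁ hh₂

lemma coeff_ratio_le_sq_ratio_rpow (hd : 0 < d) (hlow : (γ₁ / γ₂) ^ (1 / d) ≤ h₁ / h₂) :
    γ₁ * h₁ ^ 2 / (γ₂ * h₂ ^ 2) ≤ ((h₁ / h₂) ^ 2) ^ (d / 2 + 1) := by
  have ht : 0 < h₁ / h₂ := by positivity
  have hA : γ₁ / γ₂ ≤ (h₁ / h₂) ^ d := by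
    rwa [one_div, rpow_inv_le_iff_of_pos (by positivity) ht.le hd] at hlow
  calc γ₁ * h₁ ^ 2 / (γ₂ * h₂ ^ 2) = γ₁ / γ₂ * (h₁ / h₂) ^ 2 := by field_simp
    _ ≤ (h₁ / h₂) ^ d * (h₁ / h₂) ^ 2 := by gcongr
    _ = ((h₁ / h₂) ^ 2) ^ (d / 2 + 1) := by
      rw [← rpow_natCast, ← rpow_mul ht.le, ← rpow_add ht]
      push_cast
      ring_nf

lemma coeff_ratio_le_one (hhigh : h₁ / h₂ ≤ (γ₂ / γ₁) ^ ((1 : ℝ) / 2)) :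
    γ₁ * h₁ ^ 2 / (γ₂ * h₂ ^ 2) ≤ 1 := by
  rw [one_div, le_rpow_inv_iff_of_pos (by positivity) (by positivity) two_pos, rpow_two,
    div_pow, div_le_div_iff₀ (by positivity) hγ₁] at hhigh
  rw [div_le_one (by positivity)]
  linarith

lemma coeff_ratio_le_rpow (hd : 0 < d) (hlow : (γ₁ / γ₂) ^ (1 / d) ≤ h₁ / h₂)
    (hhigh : h₁ / h₂ ≤ (γ₂ / γ₁) ^ ((1 : ℝ) / 2)) (r : ℝ) :
    γ₁ * h₁ ^ 2 / (γ₂ * h₂ ^ 2) ≤ ((r ^ 2 + h₁ ^ 2) / (r ^ 2 + h₂ ^ 2)) ^ (d / 2 + 1) := by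
  calc γ₁ * h₁ ^ 2 / (γ₂ * h₂ ^ 2) ≤ (min ((h₁ / h₂) ^ 2) 1) ^ (d / 2 + 1) := by
        rcases min_choice ((h₁ / h₂) ^ 2) 1 with hmin | hmin <;> rw [hmin]
        · exact coeff_ratio_le_sq_ratio_rpow hγ₁ hγ₂ hh₁ hh₂ hd hlow
        · rw [one_rpow]
          exact coeff_ratio_le_one hγ₁ hγ₂ hh₁ hh₂ hhigh
    _ ≤ ((r ^ 2 + h₁ ^ 2) / (r ^ 2 + h₂ ^ 2)) ^ (d / 2 + 1) := by
        gcongr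
        rw [div_pow]
        exact min_div_one_le_add_div_add (by positivity) (by positivity)

lemma weighted_rpow_neg_le (hd : 0 < d) (hlow : (γ₁ / γ₂) ^ (1 / d) ≤ h₁ / h₂)
    (hhigh : h₁ / h₂ ≤ (γ₂ / γ₁) ^ ((1 : ℝ) / 2)) (r : ℝ) :
    γ₁ * h₁ ^ 2 * (r ^ 2 + h₁ ^ 2) ^ (-(d / 2 + 1))
      ≤ γ₂ * h₂ ^ 2 * (r ^ 2 + h₂ ^ 2) ^ (-(d / 2 + 1)) := by
  have hs₁ : 0 < r ^ 2 + h₁ ^ 2 := by positivity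
  have hs₂ : 0 < r ^ 2 + h₂ ^ 2 := by positivity
  have key := coeff_ratio_le_rpow hγ₁ hγ₂ hh₁ hh₂ hd hlow hhigh r
  rw [div_rpow hs₁.le hs₂.le, div_le_div_iff₀ (by positivity) (by positivity)] at key
  rw [rpow_neg hs₁.le, rpow_neg hs₂.le, ← div_eq_mul_inv, ← div_eq_mul_inv,
    div_le_div_iff₀ (by positivity) (by positivity)]
  linarith

end Coefficients

lemma monotoneOn_const_mul_sub_rpow_mul_sq_add_sq_rpow {c d γ₁ γ₂ h₁ h₂ : ℝ} (hc : 0 ≤ c)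
    (hd : 0 ≤ d) (hle : ∀ r, γ₁ * h₁ ^ 2 * (r ^ 2 + h₁ ^ 2) ^ (-(d / 2 + 1))
      ≤ γ₂ * h₂ ^ 2 * (r ^ 2 + h₂ ^ 2) ^ (-(d / 2 + 1))) :
    MonotoneOn (fun r : ℝ => c * (γ₂ * (r ^ d * (r ^ 2 + h₂ ^ 2) ^ (-d / 2))
      - γ₁ * (r ^ d * (r ^ 2 + h₁ ^ 2) ^ (-d / 2)))) (Ioi 0) := by
  have hderiv (r : ℝ) (hr : r ∈ Ioi 0) :
      HasDerivAt (fun r : ℝ => c * (γ₂ * (r ^ d * (r ^ 2 + h₂ ^ 2) ^ (-d / 2))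
        - γ₁ * (r ^ d * (r ^ 2 + h₁ ^ 2) ^ (-d / 2))))
      (c * (d * r ^ (d - 1)) * (γ₂ * h₂ ^ 2 * (r ^ 2 + h₂ ^ 2) ^ (-(d / 2 + 1))
        - γ₁ * h₁ ^ 2 * (r ^ 2 + h₁ ^ 2) ^ (-(d / 2 + 1)))) r := by
    refine ((((hasDerivAt_rpow_mul_sq_add_sq_rpow d h₂ hr).const_mul γ₂).sub
      ((hasDerivAt_rpow_mul_sq_add_sq_rpow d h₁ hr).const_mul γ₁)).const_mul c).congr_deriv ?_
    ring
  refine monotoneOn_of_deriv_nonneg (convex_Ioi 0)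
    (fun r hr => (hderiv r hr).continuousAt.continuousWithinAt) ?_ ?_ <;> rw [interior_Ioi]
  · exact fun r hr => (hderiv r hr).differentiableAt.differentiableWithinAt
  · intro r (hr : 0 < r)
    rw [(hderiv r hr).deriv]
    exact mul_nonneg (mul_nonneg hc (by positivity)) (sub_nonneg.2 (hle r))

/-- Under `(γ₁/γ₂)^{1/d} ≤ h₁/h₂ ≤ (γ₂/γ₁)^{1/2}`, for all `r > 0` one has
`(r²+h₁²)/(r²+h₂²) ≥ (γ₁h₁²/(γ₂h₂²))^{2/(d+2)}`, and consequently
`r ↦ r^{d-1} Q'(r)` is nondecreasing on `(0,∞)`. -/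
theorem rpow_mul_Q_deriv_monotone (d γ₁ γ₂ h₁ h₂ : ℝ) (hd : 2 ≤ d)
    (hγ₁ : 0 < γ₁) (hγ₂ : 0 < γ₂) (hh₁ : 0 < h₁) (hh₂ : 0 < h₂)
    (hlow : (γ₁ / γ₂) ^ (1 / d) ≤ h₁ / h₂)
    (hhigh : h₁ / h₂ ≤ (γ₂ / γ₁) ^ ((1 : ℝ) / 2)) :
    (∀ r : ℝ, 0 < r →
      (γ₁ * h₁ ^ 2 / (γ₂ * h₂ ^ 2)) ^ (2 / (d + 2))
        ≤ (r ^ 2 + h₁ ^ 2) / (r ^ 2 + h₂ ^ 2)) ∧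
    MonotoneOn
      (fun r : ℝ => r ^ (d - 1) *
        (max 1 (d - 2) * r *
          (γ₂ * (r ^ 2 + h₂ ^ 2) ^ (-d / 2) - γ₁ * (r ^ 2 + h₁ ^ 2) ^ (-d / 2))))
      (Set.Ioi (0 : ℝ)) := by
  have hd₀ : 0 < d := by linarith
  refine ⟨fun r _ => ?_, ?_⟩
  · rw [show 2 / (d + 2) = (d / 2 + 1)⁻¹ by field_simp,
      rpow_inv_le_iff_of_pos (by positivity) (by positivity) (by positivity)]
    exact coeff_ratio_le_rpow hγ₁ hγ₂ hh₁ hh₂ hd₀ hlow hhigh r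
  · have hmono := monotoneOn_const_mul_sub_rpow_mul_sq_add_sq_rpow (c := max 1 (d - 2))
      (le_max_of_le_left zero_le_one) hd₀.le (weighted_rpow_neg_le hγ₁ hγ₂ hh₁ hh₂ hd₀ hlow hhigh)
    refine hmono.congr fun r (hr : 0 < r) => ?_
    simp only [rpow_sub_one hr.ne']
    field_simp
end

section
/- Let γ₁, γ₂, h₁, h₂ > 0, d ≥ 2, and suppose γ₂/γ₁ = (h₂/h₁)^d. Then the density g_c(r) = γ₂h₂²/(r²+h₂²)^{d/2+1} − γ₁h₁²/(r²+h₁²)^{d/2+1} vanishes at r = 0 and is strictly positive for all r > 0 (when h₁ < h₂). -/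
open Real

/-! Writing `c = γ₁ / h₁ ^ d`, the ratio condition says `γᵢ = c hᵢ ^ d`, so each term of `g_c` is
`c (hᵢ² / (r² + hᵢ²)) ^ (d/2 + 1)`. At `r = 0` both bases equal `1`; for `r > 0` the base
`h² / (r² + h²)` is strictly increasing in `h`, and so is its positive power. -/

lemma eq_div_rpow_mul_rpow_of_div_eq_div_rpow {γ₁ γ₂ h₁ h₂ d : ℝ} (hγ₁ : γ₁ ≠ 0)
    (hh₁ : 0 < h₁) (hh₂ : 0 ≤ h₂) (hratio : γ₂ / γ₁ = (h₂ / h₁) ^ d) :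
    γ₂ = γ₁ / h₁ ^ d * h₂ ^ d := by
  rw [(div_eq_iff hγ₁).mp hratio, div_rpow hh₂ hh₁.le]
  ring

lemma mul_rpow_mul_sq_div_rpow (c d a : ℝ) {h : ℝ} (hh : 0 < h) (ha : 0 ≤ a) :
    c * h ^ d * h ^ 2 / (a + h ^ 2) ^ (d / 2 + 1) = c * (h ^ 2 / (a + h ^ 2)) ^ (d / 2 + 1) := by
  have hsq : (h ^ 2) ^ (d / 2 + 1) = h ^ d * h ^ 2 := by
    rw [← rpow_natCast h 2, ← rpow_mul hh.le, ← rpow_add hh]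
    congr 1
    push_cast
    ring
  rw [div_rpow (by positivity) (by positivity), hsq]
  ring

lemma sq_div_add_sq_lt_sq_div_add_sq {a h₁ h₂ : ℝ} (ha : 0 < a) (hh₁ : 0 < h₁) (hh : h₁ < h₂) :
    h₁ ^ 2 / (a + h₁ ^ 2) < h₂ ^ 2 / (a + h₂ ^ 2) := by
  rw [div_lt_div_iff₀ (by positivity) (by positivity)]
  nlinarith [mul_lt_mul_of_pos_left (pow_lt_pow_left₀ hh hh₁.le two_ne_zero) ha]

theorem gc_transition_case_general (d γ₁ γ₂ h₁ h₂ : ℝ) (hd : 2 ≤ d)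
    (hγ₁ : 0 < γ₁) (hh₁ : 0 < h₁)
    (hh : h₁ < h₂) (hratio : γ₂ / γ₁ = (h₂ / h₁) ^ d) :
    (γ₂ * h₂ ^ 2 / ((0 : ℝ) ^ 2 + h₂ ^ 2) ^ (d / 2 + 1)
      - γ₁ * h₁ ^ 2 / ((0 : ℝ) ^ 2 + h₁ ^ 2) ^ (d / 2 + 1) = 0) ∧
    ∀ r : ℝ, 0 < r →
      0 < γ₂ * h₂ ^ 2 / (r ^ 2 + h₂ ^ 2) ^ (d / 2 + 1)
        - γ₁ * h₁ ^ 2 / (r ^ 2 + h₁ ^ 2) ^ (d / 2 + 1) := by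
  have hh₂ : 0 < h₂ := hh₁.trans hh
  set c := γ₁ / h₁ ^ d
  have hc : 0 < c := div_pos hγ₁ (rpow_pos_of_pos hh₁ d)
  have hγ₁c : γ₁ = c * h₁ ^ d := (div_mul_cancel₀ γ₁ (rpow_pos_of_pos hh₁ d).ne').symm
  have hγ₂c : γ₂ = c * h₂ ^ d :=
    eq_div_rpow_mul_rpow_of_div_eq_div_rpow hγ₁.ne' hh₁ hh₂.le hratio
  rw [hγ₂c, hγ₁c]
  refine ⟨?_, fun r hr => ?_⟩
  · rw [mul_rpow_mul_sq_div_rpow c d _ hh₂ (sq_nonneg 0),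
      mul_rpow_mul_sq_div_rpow c d _ hh₁ (sq_nonneg 0)]
    simp only [zero_pow two_ne_zero, zero_add, div_self (pow_pos hh₁ 2).ne',
      div_self (pow_pos hh₂ 2).ne', sub_self]
  · rw [mul_rpow_mul_sq_div_rpow c d _ hh₂ (sq_nonneg r),
      mul_rpow_mul_sq_div_rpow c d _ hh₁ (sq_nonneg r), sub_pos]
    exact mul_lt_mul_of_pos_left (rpow_lt_rpow (by positivity)
      (sq_div_add_sq_lt_sq_div_add_sq (pow_pos hr 2) hh₁ hh) (by linarith)) hc

/-- Transition case `γ₂/γ₁ = (h₂/h₁)^d` with `h₁ < h₂`: the density `g_c`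
vanishes at the origin and is strictly positive for `r > 0`. -/
theorem gc_transition_case (d γ₁ γ₂ h₁ h₂ : ℝ) (hd : 2 ≤ d)
    (hγ₁ : 0 < γ₁) (hγ₂ : 0 < γ₂) (hh₁ : 0 < h₁) (hh₂ : 0 < h₂)
    (hh : h₁ < h₂) (hratio : γ₂ / γ₁ = (h₂ / h₁) ^ d) :
    (γ₂ * h₂ ^ 2 / ((0 : ℝ) ^ 2 + h₂ ^ 2) ^ (d / 2 + 1)
      - γ₁ * h₁ ^ 2 / ((0 : ℝ) ^ 2 + h₁ ^ 2) ^ (d / 2 + 1) = 0) ∧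
    ∀ r : ℝ, 0 < r →
      0 < γ₂ * h₂ ^ 2 / (r ^ 2 + h₂ ^ 2) ^ (d / 2 + 1)
        - γ₁ * h₁ ^ 2 / (r ^ 2 + h₁ ^ 2) ^ (d / 2 + 1) :=
  gc_transition_case_general d γ₁ γ₂ h₁ h₂ hd hγ₁ hh₁ hh hratio
end
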